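/- arXiv:1608.01183 — 3 statements merged into one kernel-verified Lean document; each statement's English description precedes it below -/
import Mathlib

section
/- Let A ∈ ℂ^{p×m}, B ∈ ℂ^{n×q}, C ∈ ℂ^{p×n}, D ∈ ℂ^{m×q}. The homogeneous equation AXB + CX*D = 0 has only the trivial solution X = 0 (X ∈ ℂ^{m×n}) if and only if the system of two equations AXB + CYD = 0 and D*XC* + B*YA* = 0, in the unknowns X ∈ ℂ^{m×n} and Y ∈ ℂ^{n×m}, has only the trivial solution X = 0, Y = 0. -/
open Matrix

/-- The matrix pencil `λ M + N`, as a matrix with entries in `ℂ[λ]`. -/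
noncomputable def pencilMat {k l : ℕ} (M N : Matrix (Fin k) (Fin l) ℂ) :
    Matrix (Fin k) (Fin l) (Polynomial ℂ) :=
  Matrix.of fun i j => Polynomial.X * Polynomial.C (M i j) + Polynomial.C (N i j)

/-- Determinant of a possibly rectangular polynomial matrix: the usual determinant if the
matrix is square, and `0` (by convention) otherwise. -/
noncomputable def polyDet {a b : ℕ} (M : Matrix (Fin a) (Fin b) (Polynomial ℂ)) :
    Polynomial ℂ :=
  if h : a = b then (M.submatrix (Fin.cast h.symm) id).det else 0

/-- A (polynomial-matrix) pencil is regular if its characteristic polynomial is not zero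
(in particular the pencil must be square). -/
def PolyMatRegular {a b : ℕ} (M : Matrix (Fin a) (Fin b) (Polynomial ℂ)) : Prop :=
  polyDet M ≠ 0

/-- The spectrum of a pencil, as a subset of `ℂ ∪ {∞}` (modelled by `WithTop ℂ`):
the finite eigenvalues are the roots of the characteristic polynomial, and `∞` is an
eigenvalue whenever the degree of the characteristic polynomial is less than the size. -/
noncomputable def specSet {a b : ℕ} (M : Matrix (Fin a) (Fin b) (Polynomial ℂ)) :
    Set (WithTop ℂ) :=
  {x | (∃ c : ℂ, x = (c : WithTop ℂ) ∧ (polyDet M).IsRoot c) ∨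
       (x = ⊤ ∧ (polyDet M).degree < (b : ℕ))}

/-- Algebraic multiplicity of a finite eigenvalue of a pencil. -/
noncomputable def finMult {a b : ℕ} (M : Matrix (Fin a) (Fin b) (Polynomial ℂ)) (c : ℂ) : ℕ :=
  (polyDet M).rootMultiplicity c

/-- Multiplicity of the infinite eigenvalue of a pencil. -/
noncomputable def infMult {a b : ℕ} (M : Matrix (Fin a) (Fin b) (Polynomial ℂ)) : ℕ :=
  b - (polyDet M).natDegree

/-- Extended reciprocal on `ℂ ∪ {∞}`, with the conventions `0⁻¹ = ∞` and `∞⁻¹ = 0`. -/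
noncomputable def recipExt : WithTop ℂ → WithTop ℂ :=
  WithTop.recTopCoe ((0 : ℂ) : WithTop ℂ)
    (fun c => if c = 0 then (⊤ : WithTop ℂ) else ((c⁻¹ : ℂ) : WithTop ℂ))

/-- Complex conjugation extended to `ℂ ∪ {∞}`, with `conj ∞ = ∞`. -/
noncomputable def conjExt : WithTop ℂ → WithTop ℂ :=
  WithTop.map (starRingEnd ℂ)

/-- A subset of `ℂ ∪ {∞}` is reciprocal free if `λ ≠ μ⁻¹` for all `λ, μ` in it. -/
def RecipFree (S : Set (WithTop ℂ)) : Prop :=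
  ∀ x ∈ S, ∀ y ∈ S, x ≠ recipExt y

/-- A subset of `ℂ ∪ {∞}` is `*`-reciprocal free if `λ ≠ (conj μ)⁻¹` for all `λ, μ` in it. -/
def StarRecipFree (S : Set (WithTop ℂ)) : Prop :=
  ∀ x ∈ S, ∀ y ∈ S, x ≠ recipExt (conjExt y)

/-- The pencil `Q(λ) = [[λ Dᵀ, Bᵀ], [A, λ C]]` associated with `A X B + C Xᵀ D = E`. -/
noncomputable def Qt {p m n q : ℕ} (A : Matrix (Fin p) (Fin m) ℂ) (B : Matrix (Fin n) (Fin q) ℂ)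
    (C : Matrix (Fin p) (Fin n) ℂ) (D : Matrix (Fin m) (Fin q) ℂ) :
    Matrix (Fin (q + p)) (Fin (m + n)) (Polynomial ℂ) :=
  Matrix.reindex finSumFinEquiv finSumFinEquiv
    (Matrix.fromBlocks (pencilMat Dᵀ 0) (pencilMat 0 Bᵀ) (pencilMat 0 A) (pencilMat C 0))

/-- The pencil `Q(λ) = [[λ D*, B*], [A, λ C]]` associated with `A X B + C X* D = E`. -/
noncomputable def Qs {p m n q : ℕ} (A : Matrix (Fin p) (Fin m) ℂ) (B : Matrix (Fin n) (Fin q) ℂ)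
    (C : Matrix (Fin p) (Fin n) ℂ) (D : Matrix (Fin m) (Fin q) ℂ) :
    Matrix (Fin (q + p)) (Fin (m + n)) (Polynomial ℂ) :=
  Matrix.reindex finSumFinEquiv finSumFinEquiv
    (Matrix.fromBlocks (pencilMat Dᴴ 0) (pencilMat 0 Bᴴ) (pencilMat 0 A) (pencilMat C 0))

/-- A (possibly rectangular) matrix is invertible if it has a two-sided inverse. -/
def HasTwoSidedInverse {a b : Type*} [Fintype a] [Fintype b] [DecidableEq a] [DecidableEq b]
    (M : Matrix a b ℂ) : Prop :=
  ∃ N : Matrix b a ℂ, M * N = 1 ∧ N * M = 1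

/-- Core spectrum obtained by removing the dimension-induced infinite eigenvalue:
`Λ(Q)` if `m_∞(Q) ≠ d`, and `Λ(Q) \ {∞}` if `m_∞(Q) = d`. -/
noncomputable def coreSpecInf {a b : ℕ} (M : Matrix (Fin a) (Fin b) (Polynomial ℂ)) (d : ℕ) :
    Set (WithTop ℂ) :=
  if infMult M = d then specSet M \ {(⊤ : WithTop ℂ)} else specSet M

/-- Core spectrum obtained by removing the dimension-induced zero eigenvalue:
`Λ(Q)` if `m₀(Q) ≠ d`, and `Λ(Q) \ {0}` if `m₀(Q) = d`. -/
noncomputable def coreSpecZero {a b : ℕ} (M : Matrix (Fin a) (Fin b) (Polynomial ℂ)) (d : ℕ) :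
    Set (WithTop ℂ) :=
  if finMult M 0 = d then specSet M \ {((0 : ℂ) : WithTop ℂ)} else specSet M

/-- The block matrix `M_s(A, C)` with `A` on the block diagonal and `C` below it. -/
noncomputable def blockM {p m : ℕ} (s : ℕ) (A C : Matrix (Fin p) (Fin m) ℂ) :
    Matrix (Fin (s + 1) × Fin p) (Fin s × Fin m) ℂ :=
  Matrix.of fun ir jc =>
    if (ir.1 : ℕ) = (jc.1 : ℕ) then A ir.2 jc.2
    else if (ir.1 : ℕ) = (jc.1 : ℕ) + 1 then C ir.2 jc.2 else 0

/-! Solutions `(X, Y)` of the system give the solutions `X + Yᴴ` and `I • (X - Yᴴ)` of the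
`*`-equation, from which `X` and `Y` are recovered; conversely, `X` solves the `*`-equation
iff `(X, Xᴴ)` solves the system, the second equation being the conjugate transpose of the first. -/

section StarSylvester

variable {l m n o : Type*} [Fintype m] [Fintype n]

theorem conjTranspose_mul_mul_add_mul_mul {α : Type*} [Semiring α] [StarRing α]
    (A : Matrix l m α) (B : Matrix n o α) (C : Matrix l n α) (D : Matrix m o α)
    (X : Matrix m n α) (Y : Matrix n m α) :
    (A * X * B + C * Y * D)ᴴ = Dᴴ * Yᴴ * Cᴴ + Bᴴ * Xᴴ * Aᴴ := by
  simp only [conjTranspose_add, conjTranspose_mul, Matrix.mul_assoc, add_comm]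

variable (A : Matrix l m ℂ) (B : Matrix n o ℂ) (C : Matrix l n ℂ) (D : Matrix m o ℂ)
  (X : Matrix m n ℂ) (Y : Matrix n m ℂ)

theorem starSylvester_add_conjTranspose :
    A * (X + Yᴴ) * B + C * (X + Yᴴ)ᴴ * D =
      (A * X * B + C * Y * D) + (A * Yᴴ * B + C * Xᴴ * D) := by
  simp only [Matrix.mul_add, Matrix.add_mul, conjTranspose_add, conjTranspose_conjTranspose]
  abel

theorem starSylvester_I_smul_sub_conjTranspose :
    A * (Complex.I • (X - Yᴴ)) * B + C * (Complex.I • (X - Yᴴ))ᴴ * D =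
      Complex.I • ((A * X * B + C * Y * D) - (A * Yᴴ * B + C * Xᴴ * D)) := by
  simp only [conjTranspose_smul, Complex.star_def, Complex.conj_I, conjTranspose_sub,
    conjTranspose_conjTranspose, Matrix.mul_smul, Matrix.smul_mul, Matrix.mul_sub,
    Matrix.sub_mul]
  module

end StarSylvester

/-- The homogeneous `*`-Sylvester equation `A X B + C Xᴴ D = 0` has only the trivial
solution iff the linear system `A X B + C Y D = 0`, `Dᴴ X Cᴴ + Bᴴ Y Aᴴ = 0` has only the
trivial solution. -/
theorem stmt4 (p m n q : ℕ) (A : Matrix (Fin p) (Fin m) ℂ) (B : Matrix (Fin n) (Fin q) ℂ)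
    (C : Matrix (Fin p) (Fin n) ℂ) (D : Matrix (Fin m) (Fin q) ℂ) :
    (∀ X : Matrix (Fin m) (Fin n) ℂ, A * X * B + C * Xᴴ * D = 0 → X = 0) ↔
      (∀ (X : Matrix (Fin m) (Fin n) ℂ) (Y : Matrix (Fin n) (Fin m) ℂ),
        A * X * B + C * Y * D = 0 → Dᴴ * X * Cᴴ + Bᴴ * Y * Aᴴ = 0 → X = 0 ∧ Y = 0) := by
  constructor
  · intro hinj X Y h₁ h₂
    have h₂' : A * Yᴴ * B + C * Xᴴ * D = 0 := by
      simpa only [conjTranspose_mul_mul_add_mul_mul, conjTranspose_conjTranspose,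
        conjTranspose_zero] using congrArg conjTranspose h₂
    have hsum : X + Yᴴ = 0 :=
      hinj _ (by rw [starSylvester_add_conjTranspose, h₁, h₂', add_zero])
    have hdiff : X - Yᴴ = 0 := by
      refine (smul_eq_zero.mp (hinj _ ?_)).resolve_left Complex.I_ne_zero
      rw [starSylvester_I_smul_sub_conjTranspose, h₁, h₂', sub_zero, smul_zero]
    have hXY : X = Yᴴ := sub_eq_zero.mp hdiff
    have hX₀ : X = 0 := by
      rw [← hXY, ← two_smul ℂ] at hsum
      exact (smul_eq_zero.mp hsum).resolve_left two_ne_zero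
    exact ⟨hX₀, by rwa [hXY, conjTranspose_eq_zero] at hX₀⟩
  · intro h X hX
    refine (h X Xᴴ hX ?_).1
    simpa only [conjTranspose_mul_mul_add_mul_mul, conjTranspose_conjTranspose,
      conjTranspose_zero] using congrArg conjTranspose hX
end

section
/- Let A, C ∈ ℂ^{p×m} and B, D ∈ ℂ^{n×q} with p, m, n, q positive. If the generalized Sylvester equation AXB − CXD = E (with unknown X ∈ ℂ^{m×n}) has exactly one solution for every right-hand side E ∈ ℂ^{p×q}, then p/m = n/q = d for some d ∈ {1} ∪ { s/(s+1) : s a positive integer } ∪ { (s+1)/s : s a positive integer }; equivalently, either (p = m and n = q), or there is a positive integer s with ms = p(s+1) and qs = n(s+1), or there is a positive integer s with ps = m(s+1) and ns = q(s+1). -/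
open Matrix

/-!
If `X ↦ A X B - C X D` is bijective and `p < m`, the pencil `A + λC` has a nonzero polynomial
kernel vector; take one, `x(λ) = ∑ xₖ λᵏ`, of least degree `ε`. Minimality rules out kernel
vectors of degree `< ε` (a block bidiagonal matrix of size `(ε + 1)p × εm` is injective) and
makes `x₀, …, x_ε` linearly independent. For a left chain `w₀, …, w_ε` of `D + λB` the matrix
`∑ xₖ wₖᵀ` is annihilated by the Sylvester operator, so injectivity of the operator kills every
such chain (another block bidiagonal matrix has trivial left kernel). Exchanging the roles of the
two pencils, via trace duality, gives four inequalities between `p, m, n, q` and the two least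
degrees, which force `p = εg, m = (ε + 1)g, n = εh, q = (ε + 1)h`. The case `p > m` follows by
transposition.
-/

open Finset

namespace Matrix

variable {K : Type*} [Field K] {l m n o : Type*} [Fintype m] [Fintype n]

def sylvesterMap (A C : Matrix l m K) (B D : Matrix n o K) : Matrix m n K →ₗ[K] Matrix l o K where
  toFun X := A * X * B - C * X * D
  map_add' X Y := by simp only [Matrix.mul_add, Matrix.add_mul]; abel
  map_smul' c X := by simp only [Matrix.mul_smul, Matrix.smul_mul, smul_sub, RingHom.id_apply]

theorem sylvesterMap_apply (A C : Matrix l m K) (B D : Matrix n o K) (X : Matrix m n K) :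
    sylvesterMap A C B D X = A * X * B - C * X * D := rfl

theorem trace_mul_sylvesterMap [Fintype l] [Fintype o] (A C : Matrix l m K)
    (B D : Matrix n o K) (Y : Matrix o l K) (X : Matrix m n K) :
    trace (Y * sylvesterMap A C B D X) = trace (sylvesterMap B D A C Y * X) := by
  simp only [sylvesterMap_apply, Matrix.mul_sub, Matrix.sub_mul, trace_sub, ← Matrix.mul_assoc]
  rw [trace_mul_comm _ B, trace_mul_comm _ D]
  simp only [Matrix.mul_assoc]

theorem injective_sylvesterMap_swap [Fintype l] [Fintype o]
    {A C : Matrix l m K} {B D : Matrix n o K} (h : Function.Surjective (sylvesterMap A C B D)) :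
    Function.Injective (sylvesterMap B D A C) := by
  refine (injective_iff_map_eq_zero _).2 fun Y hY => ext_iff_trace_mul_right.2 fun E => ?_
  obtain ⟨X, rfl⟩ := h E
  rw [trace_mul_sylvesterMap, hY, Matrix.zero_mul, Matrix.zero_mul, trace_zero, trace_zero]

theorem sylvesterMap_transpose (A C : Matrix l m K) (B D : Matrix n o K) (X : Matrix m n K) :
    sylvesterMap Bᵀ Dᵀ Aᵀ Cᵀ Xᵀ = (sylvesterMap A C B D X)ᵀ := by
  simp only [sylvesterMap_apply, transpose_sub, transpose_mul, Matrix.mul_assoc]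

theorem bijective_sylvesterMap_transpose {A C : Matrix l m K} {B D : Matrix n o K}
    (h : Function.Bijective (sylvesterMap A C B D)) :
    Function.Bijective (sylvesterMap Bᵀ Dᵀ Aᵀ Cᵀ) := by
  have e : ⇑(sylvesterMap Bᵀ Dᵀ Aᵀ Cᵀ) = transpose ∘ sylvesterMap A C B D ∘ transpose := by
    funext X
    rw [Function.comp_apply, Function.comp_apply, ← sylvesterMap_transpose, transpose_transpose]
  rw [e]
  exact (transposeAddEquiv l o K).bijective.comp (h.comp (transposeAddEquiv n m K).bijective)

theorem card_mul_card_eq_of_bijective_sylvesterMap [Fintype l] [Fintype o]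
    {A C : Matrix l m K} {B D : Matrix n o K} (h : Function.Bijective (sylvesterMap A C B D)) :
    Fintype.card m * Fintype.card n = Fintype.card l * Fintype.card o := by
  simpa [Module.finrank_matrix] using (LinearEquiv.ofBijective _ h).finrank_eq

end Matrix

namespace MatrixPencil

variable {K : Type*} [Field K] {l m n o : Type*} [Fintype m] [Fintype n]

/-- `x` is the coefficient sequence of a polynomial vector `x(λ) = ∑ xₖ λᵏ` of degree `< t`
with `(P + λQ) x(λ) = 0`. -/
structure IsSolution (P Q : Matrix l m K) (t : ℕ) (x : ℕ → m → K) : Prop where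
  eq_zero_of_le : ∀ k, t ≤ k → x k = 0
  mulVec_zero : P *ᵥ x 0 = 0
  mulVec_succ_add : ∀ k, P *ᵥ x (k + 1) + Q *ᵥ x k = 0

structure IsMinimalSolution (P Q : Matrix l m K) (ε : ℕ) (x : ℕ → m → K) : Prop where
  isSolution : IsSolution P Q (ε + 1) x
  ne_zero : x ≠ 0
  eq_zero_of_isSolution : ∀ y, IsSolution P Q ε y → y = 0

def IsLeftChain [Fintype l] (P Q : Matrix l m K) (t : ℕ) (u : ℕ → l → K) : Prop :=
  ∀ k < t, u k ᵥ* P + u (k + 1) ᵥ* Q = 0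

variable {P Q : Matrix l m K}

namespace IsMinimalSolution

variable {ε : ℕ} {x : ℕ → m → K}

theorem top_ne_zero (hx : IsMinimalSolution P Q ε x) : x ε ≠ 0 := by
  intro hε
  refine hx.ne_zero (hx.eq_zero_of_isSolution x ⟨fun k hk => ?_, hx.isSolution.mulVec_zero,
    hx.isSolution.mulVec_succ_add⟩)
  rcases hk.eq_or_lt with rfl | hk
  · exact hε
  · exact hx.isSolution.eq_zero_of_le k hk

theorem sum_smul_add_eq_zero (hx : IsMinimalSolution P Q ε x) {c : ℕ → K}
    (hc : ∑ i ∈ range (ε + 1), c i • x i = 0) (j : ℕ) :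
    ∑ i ∈ range (ε + 1), c i • x (i + j) = 0 := by
  obtain ⟨hsupp, -, hsucc⟩ := hx.isSolution
  cases j with
  | zero => simpa using hc
  | succ j =>
    have hy : IsSolution P Q ε fun j => ∑ i ∈ range (ε + 1), c i • x (i + (j + 1)) := by
      refine ⟨fun k hk => sum_eq_zero fun i _ => ?_, ?_, fun k => ?_⟩
      · rw [hsupp _ (by omega), smul_zero]
      · calc P *ᵥ ∑ i ∈ range (ε + 1), c i • x (i + (0 + 1))
            = -(Q *ᵥ ∑ i ∈ range (ε + 1), c i • x i) := by
              simp only [mulVec_sum, mulVec_smul, zero_add, eq_neg_of_add_eq_zero_left (hsucc _),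
                smul_neg, sum_neg_distrib]
          _ = 0 := by rw [hc, mulVec_zero, neg_zero]
      · simp only [mulVec_sum, mulVec_smul, ← sum_add_distrib, ← smul_add, ← add_assoc]
        exact sum_eq_zero fun i _ => by rw [hsucc, smul_zero]
    exact congrFun (hx.eq_zero_of_isSolution _ hy) j

theorem coeff_eq_zero_of_sum_smul_eq_zero (hx : IsMinimalSolution P Q ε x) {c : ℕ → K}
    (hc : ∑ i ∈ range (ε + 1), c i • x i = 0) {i : ℕ} (hi : i ≤ ε) : c i = 0 := by
  classical
  by_contra hci
  have hex : ∃ i, i ≤ ε ∧ c i ≠ 0 := ⟨i, hi, hci⟩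
  obtain ⟨s, ⟨hsε, hs⟩, hlow⟩ : ∃ s, (s ≤ ε ∧ c s ≠ 0) ∧ ∀ i < s, c i = 0 :=
    ⟨Nat.find hex, Nat.find_spec hex, fun i hi => by
      by_contra h; exact Nat.find_min hex hi ⟨(hi.trans_le (Nat.find_spec hex).1).le, h⟩⟩
  -- shifting the relation by `ε - s` isolates `c s • x ε`
  have htop : ∑ i ∈ range (ε + 1), c i • x (i + (ε - s)) = c s • x ε := by
    rw [sum_eq_single_of_mem s (by simp; omega), show s + (ε - s) = ε by omega]
    intro i hi his
    rcases his.lt_or_gt with h | h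
    · rw [hlow i h, zero_smul]
    · rw [hx.isSolution.eq_zero_of_le _ (by omega), smul_zero]
  rw [hx.sum_smul_add_eq_zero hc] at htop
  exact smul_ne_zero hs hx.top_ne_zero htop.symm

theorem eq_zero_of_isLeftChain {A C : Matrix l m K} {B D : Matrix n o K}
    (hL : Function.Injective (sylvesterMap A C B D)) (hx : IsMinimalSolution A C ε x)
    {w : ℕ → n → K} (hw : IsLeftChain D B ε w) {k : ℕ} (hk : k ≤ ε) : w k = 0 := by
  obtain ⟨hsupp, hzero, hsucc⟩ := hx.isSolution
  have hCx : C *ᵥ x ε = 0 := by simpa [hsupp (ε + 1) le_rfl] using hsucc ε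
  -- `A xₖ₊₁ = -C xₖ` and `wₖ₊₁ᵀ B = -wₖᵀ D`, so the two halves agree after an index shift
  have hX : sylvesterMap A C B D (∑ k ∈ range (ε + 1), vecMulVec (x k) (w k)) = 0 := by
    simp only [sylvesterMap_apply, Matrix.mul_sum, Matrix.sum_mul, mul_vecMulVec, vecMulVec_mul]
    rw [sum_range_succ', sum_range_succ _ ε, hzero, hCx, zero_vecMulVec, zero_vecMulVec,
      add_zero, add_zero, sub_eq_zero]
    refine sum_congr rfl fun k hk => ?_
    rw [eq_neg_of_add_eq_zero_left (hsucc k),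
      eq_neg_of_add_eq_zero_right (hw k (mem_range.1 hk)), neg_vecMulVec, vecMulVec_neg, neg_neg]
  have hX0 := hL (hX.trans (map_zero _).symm)
  funext f
  refine hx.coeff_eq_zero_of_sum_smul_eq_zero (c := fun i => w i f) ?_ hk
  funext e
  simpa [Matrix.sum_apply, vecMulVec_apply, mul_comm] using congrFun (congrFun hX0 e) f

end IsMinimalSolution

section BlockVector

variable {α β : Type*} [Zero α] {t : ℕ}

def toSeq (v : Fin t × β → α) : ℕ → β → α :=
  fun k b => if h : k < t then v (⟨k, h⟩, b) else 0

theorem toSeq_of_le (v : Fin t × β → α) {k : ℕ} (hk : t ≤ k) : toSeq v k = 0 := by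
  funext b
  simp [toSeq, hk.not_gt]

theorem toSeq_val (v : Fin t × β → α) (j : Fin t) (b : β) : toSeq v j b = v (j, b) := by
  simp [toSeq]

theorem eq_zero_of_toSeq_eq_zero {v : Fin t × β → α} (h : ∀ k < t, toSeq v k = 0) : v = 0 :=
  funext fun ⟨j, b⟩ => by simpa [toSeq_val] using congrFun (h j j.isLt) b

theorem sum_fin_ite_eq {M : Type*} [AddCommMonoid M] (f : ℕ → M) {k : ℕ}
    (hf : t ≤ k → f k = 0) : ∑ j : Fin t, (if k = j then f j else 0) = f k := by
  rw [Fin.sum_univ_eq_sum_range (fun j => if k = j then f j else 0), sum_ite_eq]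
  split_ifs with h
  · rfl
  · exact (hf (by simpa using h)).symm

theorem sum_fin_ite_eq' {M : Type*} [AddCommMonoid M] (f : ℕ → M) {k : ℕ}
    (hf : t ≤ k → f k = 0) : ∑ j : Fin t, (if (j : ℕ) = k then f j else 0) = f k := by
  simp only [@eq_comm _ _ k, sum_fin_ite_eq f hf]

end BlockVector

variable {a b t : ℕ} (P Q : Matrix (Fin a) (Fin b) ℂ)

theorem blockM_apply (i : Fin (t + 1)) (c : Fin a) (j : Fin t) (d : Fin b) :
    blockM t P Q (i, c) (j, d) =
      (if (i : ℕ) = j then P c d else 0) + (if (i : ℕ) = j + 1 then Q c d else 0) := by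
  simp only [blockM, of_apply]
  split_ifs <;> first | omega | simp

theorem blockM_mulVec_zero (v : Fin t × Fin b → ℂ) (c : Fin a) :
    (blockM t P Q *ᵥ v) (0, c) = (P *ᵥ toSeq v 0) c := by
  rcases t with _ | t
  · simp [mulVec, dotProduct, toSeq]
  · simp [blockM, mulVec, dotProduct, Fintype.sum_prod_type, toSeq, Fin.sum_univ_succ]

theorem blockM_mulVec_succ (v : Fin t × Fin b → ℂ) (i : Fin t) (c : Fin a) :
    (blockM t P Q *ᵥ v) (i.succ, c) = (P *ᵥ toSeq v (i + 1) + Q *ᵥ toSeq v i) c := by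
  simp only [mulVec, dotProduct, Fintype.sum_prod_type, blockM_apply, add_mul, ite_mul, zero_mul,
    sum_add_distrib, sum_ite_irrel, sum_const_zero, ← toSeq_val v, Fin.val_succ, Pi.add_apply,
    add_left_inj]
  rw [sum_fin_ite_eq (fun k => ∑ d, P c d * toSeq v k d) fun h => by simp [toSeq_of_le v h],
    sum_fin_ite_eq (fun k => ∑ d, Q c d * toSeq v k d) fun h => by simp [toSeq_of_le v h]]

theorem vecMul_blockM_apply (u : Fin (t + 1) × Fin a → ℂ) (j : Fin t) (d : Fin b) :
    (u ᵥ* blockM t P Q) (j, d) = (toSeq u j ᵥ* P + toSeq u (j + 1) ᵥ* Q) d := by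
  simp only [vecMul, dotProduct, Fintype.sum_prod_type, blockM_apply, mul_add, mul_ite, mul_zero,
    sum_add_distrib, sum_ite_irrel, sum_const_zero, ← toSeq_val u, Pi.add_apply]
  rw [sum_fin_ite_eq' (fun k => ∑ c, toSeq u k c * P c d) fun h => by simp [toSeq_of_le u h],
    sum_fin_ite_eq' (fun k => ∑ c, toSeq u k c * Q c d) fun h => by simp [toSeq_of_le u h]]

theorem blockM_mulVec_eq_zero_iff (v : Fin t × Fin b → ℂ) :
    blockM t P Q *ᵥ v = 0 ↔ IsSolution P Q t (toSeq v) := by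
  constructor
  · intro h
    refine ⟨fun k hk => toSeq_of_le v hk, funext fun c => ?_, fun k => funext fun c => ?_⟩
    · rw [← blockM_mulVec_zero, h, Pi.zero_apply, Pi.zero_apply]
    · by_cases hk : k < t
      · have hk' := congrFun h ((⟨k, hk⟩ : Fin t).succ, c)
        rwa [blockM_mulVec_succ] at hk'
      · simp [toSeq_of_le v (not_lt.1 hk), toSeq_of_le v (by omega : t ≤ k + 1)]
  · rintro ⟨-, h0, hsucc⟩
    funext ⟨i, c⟩
    cases i using Fin.cases with
    | zero => simp [blockM_mulVec_zero, h0]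
    | succ i => rw [blockM_mulVec_succ, hsucc]; rfl

theorem vecMul_blockM_eq_zero_iff (u : Fin (t + 1) × Fin a → ℂ) :
    u ᵥ* blockM t P Q = 0 ↔ IsLeftChain P Q t (toSeq u) := by
  refine ⟨fun h k hk => funext fun d => ?_, fun h => funext fun ⟨j, d⟩ => ?_⟩
  · simpa [vecMul_blockM_apply] using congrFun h (⟨k, hk⟩, d)
  · rw [vecMul_blockM_apply, h j j.isLt]; rfl

theorem mul_le_of_forall_isSolution_eq_zero (h : ∀ x, IsSolution P Q t x → x = 0) :
    t * b ≤ (t + 1) * a := by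
  have hinj : Function.Injective (blockM t P Q).mulVecLin :=
    (injective_iff_map_eq_zero _).2 fun v hv => eq_zero_of_toSeq_eq_zero fun k _ => by
      rw [h _ ((blockM_mulVec_eq_zero_iff P Q v).1 hv), Pi.zero_apply]
  simpa using LinearMap.finrank_le_finrank_of_injective hinj

theorem mul_le_of_forall_isLeftChain (h : ∀ u, IsLeftChain P Q t u → ∀ k ≤ t, u k = 0) :
    (t + 1) * a ≤ t * b := by
  have hinj : Function.Injective (blockM t P Q).vecMulLinear :=
    (injective_iff_map_eq_zero _).2 fun u hu => eq_zero_of_toSeq_eq_zero fun k hk =>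
      h _ ((vecMul_blockM_eq_zero_iff P Q u).1 hu) k (Nat.lt_succ_iff.1 hk)
  simpa using LinearMap.finrank_le_finrank_of_injective hinj

theorem exists_isMinimalSolution (hab : a < b) : ∃ ε x, IsMinimalSolution P Q ε x := by
  classical
  have hex : ∃ t, ∃ x, x ≠ 0 ∧ IsSolution P Q t x := by
    by_contra! h
    have := mul_le_of_forall_isSolution_eq_zero (t := a + 1) P Q fun x hx => by
      by_contra hx0; exact h _ x hx0 hx
    nlinarith
  obtain ⟨x, hx0, hx⟩ := Nat.find_spec hex
  obtain ⟨ε, hε⟩ : ∃ ε, Nat.find hex = ε + 1 := Nat.exists_eq_succ_of_ne_zero fun h0 =>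
    hx0 (funext fun k => hx.eq_zero_of_le k (h0 ▸ k.zero_le))
  exact ⟨ε, x, hε ▸ hx, hx0, fun y hy => by
    by_contra hy0; exact Nat.find_min hex (by omega) ⟨y, hy0, hy⟩⟩

end MatrixPencil

theorem pos_and_mul_eq_of_mul_le {p m n q ε μ : ℕ} (hn : 0 < n) (hpm : p < m) (hnq : n < q)
    (h₁ : ε * m ≤ (ε + 1) * p) (h₂ : (ε + 1) * n ≤ ε * q) (h₃ : μ * q ≤ (μ + 1) * n)
    (h₄ : (μ + 1) * p ≤ μ * m) : 0 < ε ∧ m * ε = p * (ε + 1) ∧ q * ε = n * (ε + 1) := by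
  obtain ⟨g, rfl⟩ := Nat.exists_eq_add_of_lt hpm
  obtain ⟨h, rfl⟩ := Nat.exists_eq_add_of_lt hnq
  have hεμ : ε ≤ μ := Nat.le_of_mul_le_mul_right (c := g + 1) (by nlinarith) (by omega)
  have hμε : μ ≤ ε := Nat.le_of_mul_le_mul_right (c := h + 1) (by nlinarith) (by omega)
  obtain rfl := le_antisymm hεμ hμε
  refine ⟨Nat.pos_of_ne_zero ?_, by nlinarith, by nlinarith⟩
  rintro rfl
  omega

open MatrixPencil in
theorem exists_mul_eq_of_bijective_sylvesterMap {p m n q : ℕ} (hn : 0 < n)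
    {A C : Matrix (Fin p) (Fin m) ℂ} {B D : Matrix (Fin n) (Fin q) ℂ}
    (hL : Function.Bijective (sylvesterMap A C B D)) (hpm : p < m) (hnq : n < q) :
    ∃ s, 0 < s ∧ m * s = p * (s + 1) ∧ q * s = n * (s + 1) := by
  obtain ⟨ε, x, hx⟩ := exists_isMinimalSolution A C hpm
  obtain ⟨μ, w, hw⟩ := exists_isMinimalSolution B D hnq
  have h₁ := mul_le_of_forall_isSolution_eq_zero A C hx.eq_zero_of_isSolution
  have h₂ := mul_le_of_forall_isLeftChain D B fun u hu k hk =>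
    hx.eq_zero_of_isLeftChain hL.1 hu hk
  have h₃ := mul_le_of_forall_isSolution_eq_zero B D hw.eq_zero_of_isSolution
  have h₄ := mul_le_of_forall_isLeftChain C A fun u hu k hk =>
    hw.eq_zero_of_isLeftChain (injective_sylvesterMap_swap hL.2) hu hk
  exact ⟨ε, pos_and_mul_eq_of_mul_le hn hpm hnq h₁ h₂ h₃ h₄⟩

theorem stmt12_general (p m n q : ℕ) (hm : 0 < m) (hn : 0 < n)
    (A C : Matrix (Fin p) (Fin m) ℂ) (B D : Matrix (Fin n) (Fin q) ℂ)
    (hUR : ∀ E : Matrix (Fin p) (Fin q) ℂ, ∃! X : Matrix (Fin m) (Fin n) ℂ,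
        A * X * B - C * X * D = E) :
    (p = m ∧ n = q) ∨
      (∃ s : ℕ, 0 < s ∧ m * s = p * (s + 1) ∧ q * s = n * (s + 1)) ∨
      (∃ s : ℕ, 0 < s ∧ p * s = m * (s + 1) ∧ n * s = q * (s + 1)) := by
  have hL : Function.Bijective (sylvesterMap A C B D) :=
    (Function.bijective_iff_existsUnique _).2 hUR
  have hcard : m * n = p * q := by
    simpa using card_mul_card_eq_of_bijective_sylvesterMap hL
  rcases lt_trichotomy p m with hpm | rfl | hmp
  · have hnq : n < q := by nlinarith
    exact Or.inr (Or.inl (exists_mul_eq_of_bijective_sylvesterMap hn hL hpm hnq))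
  · exact Or.inl ⟨rfl, Nat.eq_of_mul_eq_mul_left hm hcard⟩
  · have hqn : q < n := by nlinarith
    obtain ⟨s, hs, h₁, h₂⟩ :=
      exists_mul_eq_of_bijective_sylvesterMap hm (bijective_sylvesterMap_transpose hL) hqn hmp
    exact Or.inr (Or.inr ⟨s, hs, h₂, h₁⟩)

/-- If the generalized Sylvester equation `A X B - C X D = E` has a unique solution for
every right-hand side, then `p/m = n/q = d` with `d ∈ {1} ∪ {s/(s+1)} ∪ {(s+1)/s}`;
equivalently, either `p = m` and `n = q`, or there is a positive integer `s` with
`ms = p(s+1)` and `qs = n(s+1)`, or there is a positive integer `s` with `ps = m(s+1)`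
and `ns = q(s+1)`. -/
theorem stmt12 (p m n q : ℕ) (hp : 0 < p) (hm : 0 < m) (hn : 0 < n) (hq : 0 < q)
    (A C : Matrix (Fin p) (Fin m) ℂ) (B D : Matrix (Fin n) (Fin q) ℂ)
    (hUR : ∀ E : Matrix (Fin p) (Fin q) ℂ, ∃! X : Matrix (Fin m) (Fin n) ℂ,
        A * X * B - C * X * D = E) :
    (p = m ∧ n = q) ∨
      (∃ s : ℕ, 0 < s ∧ m * s = p * (s + 1) ∧ q * s = n * (s + 1)) ∨
      (∃ s : ℕ, 0 < s ∧ p * s = m * (s + 1) ∧ n * s = q * (s + 1)) :=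
  stmt12_general p m n q hm hn A C B D hUR
end

section
/- Define A₁ = I₂ ∈ ℂ^{2×2}, B₁ = [0] ∈ ℂ^{1×1}, C₁ = [1; 0] ∈ ℂ^{2×1}, D₁ = [1; 0] ∈ ℂ^{2×1}, and A₂ = [[0,0],[0,1]] ∈ ℂ^{2×2}, B₂ = [1] ∈ ℂ^{1×1}, C₂ = [1; 0] ∈ ℂ^{2×1}, D₂ = [1; 0] ∈ ℂ^{2×1}, and let Q₁(λ) = [[λD₁ᵀ, B₁ᵀ],[A₁, λC₁]] and Q₂(λ) = [[λD₂ᵀ, B₂ᵀ],[A₂, λC₂]] be the associated 3×3 pencils. Then: (a) there exist 3×3 permutation matrices P and S such that Q₂(λ) = P·Q₁(λ)·S for all λ ∈ ℂ; (b) the homogeneous equation A₁XB₁ + C₁XᵀD₁ = 0 has a nonzero solution X ∈ ℂ^{2×1}; (c) the homogeneous equation A₂XB₂ + C₂XᵀD₂ = 0 has only the trivial solution X = 0 in ℂ^{2×1}. -/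
/-
Explicitly `Q₁(λ) = [[λ, 0, 0], [1, 0, λ], [0, 1, 0]]` and
`Q₂(λ) = [[λ, 0, 1], [0, 0, λ], [0, 1, 0]]`, so swapping the first two rows and the first and
last columns of `Q₁` gives `Q₂`. On the other hand `B₁ = 0` reduces the first equation to
`C₁ Xᵀ D₁ = [x₁; 0]`, which vanishes at `X = [0; 1]`, while for the second data
`A₂ X B₂ + C₂ Xᵀ D₂ = [x₁; x₂] = X`.
-/

open Matrix

/-- The coefficient matrices of the two counterexample equations. -/
noncomputable def exA₁ : Matrix (Fin 2) (Fin 2) ℂ := !![1, 0; 0, 1]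
noncomputable def exB₁ : Matrix (Fin 1) (Fin 1) ℂ := !![0]
noncomputable def exC₁ : Matrix (Fin 2) (Fin 1) ℂ := !![1; 0]
noncomputable def exD₁ : Matrix (Fin 2) (Fin 1) ℂ := !![1; 0]
noncomputable def exA₂ : Matrix (Fin 2) (Fin 2) ℂ := !![0, 0; 0, 1]
noncomputable def exB₂ : Matrix (Fin 1) (Fin 1) ℂ := !![1]
noncomputable def exC₂ : Matrix (Fin 2) (Fin 1) ℂ := !![1; 0]
noncomputable def exD₂ : Matrix (Fin 2) (Fin 1) ℂ := !![1; 0]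

open Polynomial Equiv

lemma map_permMatrix_mul_mul_map_permMatrix {m n R S : Type*} [Fintype m] [DecidableEq m]
    [Fintype n] [DecidableEq n] [NonAssocSemiring R] [NonAssocSemiring S] (f : R →+* S)
    (σ : Perm m) (τ : Perm n) (M : Matrix m n S) :
    (σ.permMatrix R).map f * M * (τ.permMatrix R).map f = M.submatrix σ τ.symm := by
  rw [PEquiv.map_toMatrix, PEquiv.map_toMatrix, PEquiv.toMatrix_toPEquiv_mul,
    PEquiv.mul_toMatrix_toPEquiv, submatrix_submatrix]
  rfl

lemma Equiv.Perm.permMatrix_apply {n R : Type*} [DecidableEq n] [Zero R] [One R] (σ : Perm n)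
    (i j : n) :
    σ.permMatrix R i j = if σ i = j then 1 else 0 := by
  simp [eq_comm]

lemma Qt_ex₁_eq : Qt exA₁ exB₁ exC₁ exD₁ = !![X, 0, 0; 1, 0, X; 0, 1, 0] := by
  ext i j : 2
  fin_cases i <;> fin_cases j <;>
    simp [Qt, pencilMat, exA₁, exB₁, exC₁, exD₁, finSumFinEquiv, Fin.addCases]

lemma Qt_ex₂_eq : Qt exA₂ exB₂ exC₂ exD₂ = !![X, 0, 1; 0, 0, X; 0, 1, 0] := by
  ext i j : 2
  fin_cases i <;> fin_cases j <;>
    simp [Qt, pencilMat, exA₂, exB₂, exC₂, exD₂, finSumFinEquiv, Fin.addCases]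

lemma Qt_ex₂_eq_submatrix :
    Qt exA₂ exB₂ exC₂ exD₂ =
      (Qt exA₁ exB₁ exC₁ exD₁).submatrix (swap 0 1) (swap 0 2) := by
  rw [Qt_ex₁_eq, Qt_ex₂_eq]
  ext i j : 2
  fin_cases i <;> fin_cases j <;> rfl

lemma exA₁_mul_mul_exB₁_add (X : Matrix (Fin 2) (Fin 1) ℂ) :
    exA₁ * X * exB₁ + exC₁ * Xᵀ * exD₁ = !![X 0 0; 0] := by
  ext i j
  fin_cases i <;> fin_cases j <;>
    simp [exA₁, exB₁, exC₁, exD₁, Matrix.mul_apply, vecMul, dotProduct]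

lemma exA₂_mul_mul_exB₂_add (X : Matrix (Fin 2) (Fin 1) ℂ) :
    exA₂ * X * exB₂ + exC₂ * Xᵀ * exD₂ = X := by
  ext i j
  fin_cases i <;> fin_cases j <;>
    simp [exA₂, exB₂, exC₂, exD₂, Matrix.mul_apply, vecMul, dotProduct]

/-- The two pencils `Q₁, Q₂` are obtained from one another by row and column
permutations, yet the first homogeneous equation has a nonzero solution while the second
has only the trivial one. -/
theorem stmt16 :
    (∃ (σ τ : Equiv.Perm (Fin 3)) (P S : Matrix (Fin 3) (Fin 3) ℂ),
      (∀ i j, P i j = if σ i = j then 1 else 0) ∧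
      (∀ i j, S i j = if τ i = j then 1 else 0) ∧
      Qt exA₂ exB₂ exC₂ exD₂ =
        P.map Polynomial.C * Qt exA₁ exB₁ exC₁ exD₁ * S.map Polynomial.C) ∧
    (∃ X : Matrix (Fin 2) (Fin 1) ℂ, X ≠ 0 ∧
      exA₁ * X * exB₁ + exC₁ * Xᵀ * exD₁ = 0) ∧
    (∀ X : Matrix (Fin 2) (Fin 1) ℂ,
      exA₂ * X * exB₂ + exC₂ * Xᵀ * exD₂ = 0 → X = 0) := by
  refine ⟨⟨swap 0 1, swap 0 2, _, _, Perm.permMatrix_apply _, Perm.permMatrix_apply _, ?_⟩,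
    ⟨!![0; 1], ?_, ?_⟩, fun X hX => (exA₂_mul_mul_exB₂_add X).symm.trans hX⟩
  · rw [map_permMatrix_mul_mul_map_permMatrix, symm_swap, Qt_ex₂_eq_submatrix]
  · intro h
    simpa using congrFun (congrFun h 1) 0
  · rw [exA₁_mul_mul_exB₁_add]
    ext i j
    fin_cases i <;> fin_cases j <;> rfl
end
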